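/- The saturated automaton A_pre* accepts exactly pre*(L(A)): combining soundness and completeness, L(A_pre*) = pre*(L(A)). -/
import Mathlib


/-- Symbols of a grammar: variables `V` or terminals `T`. -/
abbrev GSym (V T : Type) := V ⊕ T

/-- A context-free grammar: a set of productions and a start variable. -/
structure CFG (V T : Type) where
  P : Set (V × List (GSym V T))
  S : V

/-- One-step derivation: apply a production in an arbitrary context. -/
def CFG.DStep {V T : Type} (G : CFG V T) (x y : List (GSym V T)) : Prop :=
  ∃ (α γ : List (GSym V T)) (A : V) (β : List (GSym V T)),
    (A, β) ∈ G.P ∧ x = α ++ Sum.inl A :: γ ∧ y = α ++ β ++ γ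

/-- `⇒*`: reflexive-transitive closure of one-step derivation. -/
def CFG.Derives {V T : Type} (G : CFG V T) : List (GSym V T) → List (GSym V T) → Prop :=
  Relation.ReflTransGen G.DStep

/-- `pre*(L)`: the set of predecessors of `L`. -/
def CFG.preStar {V T : Type} (G : CFG V T) (L : Set (List (GSym V T))) :
    Set (List (GSym V T)) :=
  {α | ∃ β ∈ L, G.Derives α β}

/-- Path relation of a nondeterministic automaton given by transitions `δ`. -/
inductive NPath {V T Q : Type} (δ : Set (Q × GSym V T × Q)) : Q → List (GSym V T) → Q → Prop
  | nil (q : Q) : NPath δ q [] q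
  | cons {q q'' q' : Q} {a : GSym V T} {w : List (GSym V T)} :
      (q, a, q'') ∈ δ → NPath δ q'' w q' → NPath δ q (a :: w) q'

/-- Language accepted from initial state `q₀` with final states `F`. -/
def NAccepts {V T Q : Type} (δ : Set (Q × GSym V T × Q)) (q₀ : Q) (F : Set Q) :
    Set (List (GSym V T)) :=
  {w | ∃ qf ∈ F, NPath δ q₀ w qf}

/-- `δ` is closed under the saturation rule for grammar `G`. -/
def SatClosed {V T Q : Type} (G : CFG V T) (δ : Set (Q × GSym V T × Q)) : Prop :=
  ∀ (A : V) (β : List (GSym V T)) (q q' : Q),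
    (A, β) ∈ G.P → NPath δ q β q' → (q, Sum.inl A, q') ∈ δ

/-- One application of the saturation rule. -/
def SatStep {V T Q : Type} (G : CFG V T) (δ₁ δ₂ : Set (Q × GSym V T × Q)) : Prop :=
  ∃ (A : V) (β : List (GSym V T)) (q q' : Q),
    (A, β) ∈ G.P ∧ NPath δ₁ q β q' ∧ δ₂ = insert (q, Sum.inl A, q') δ₁

/-- The saturated transition relation: smallest superset of `δ` closed under
the saturation rule (given as the intersection of all closed supersets). -/
def satClosure {V T Q : Type} (G : CFG V T) (δ : Set (Q × GSym V T × Q)) :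
    Set (Q × GSym V T × Q) :=
  ⋂₀ {δ' | δ ⊆ δ' ∧ SatClosed G δ'}

section Aux
variable {V T Q : Type}

theorem npath_mono {δ δ' : Set (Q × GSym V T × Q)} (h : δ ⊆ δ') {q q' : Q}
    {w : List (GSym V T)} (hp : NPath δ q w q') : NPath δ' q w q' := by
  induction hp with
  | nil => exact NPath.nil _
  | cons he _ ih => exact NPath.cons (h he) ih

theorem npath_append {δ : Set (Q × GSym V T × Q)} {q m q' : Q} {u v : List (GSym V T)}
    (h1 : NPath δ q u m) (h2 : NPath δ m v q') : NPath δ q (u ++ v) q' := by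
  induction h1 with
  | nil => exact h2
  | cons he _ ih => exact NPath.cons he (ih h2)

theorem npath_split {δ : Set (Q × GSym V T × Q)} {q' : Q} :
    ∀ {u v : List (GSym V T)} {q : Q}, NPath δ q (u ++ v) q' →
      ∃ m, NPath δ q u m ∧ NPath δ m v q' := by
  intro u
  induction u with
  | nil => intro v q h; exact ⟨q, NPath.nil _, h⟩
  | cons a u ih =>
      intro v q h
      cases h with
      | cons he hp =>
          obtain ⟨m, h1, h2⟩ := ih hp
          exact ⟨m, NPath.cons he h1, h2⟩

theorem dstep_append_right {G : CFG V T} {x y v : List (GSym V T)} (h : G.DStep x y) :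
    G.DStep (x ++ v) (y ++ v) := by
  obtain ⟨α, γ, A, β, hP, rfl, rfl⟩ := h
  exact ⟨α, γ ++ v, A, β, hP, by simp, by simp⟩

theorem dstep_append_left {G : CFG V T} {x y u : List (GSym V T)} (h : G.DStep x y) :
    G.DStep (u ++ x) (u ++ y) := by
  obtain ⟨α, γ, A, β, hP, rfl, rfl⟩ := h
  exact ⟨u ++ α, γ, A, β, hP, by simp, by simp⟩

theorem derives_append_right {G : CFG V T} {x y v : List (GSym V T)} (h : G.Derives x y) :
    G.Derives (x ++ v) (y ++ v) := by
  induction h with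
  | refl => exact Relation.ReflTransGen.refl
  | tail _ hstep ih => exact ih.tail (dstep_append_right hstep)

theorem derives_append_left {G : CFG V T} {x y u : List (GSym V T)} (h : G.Derives x y) :
    G.Derives (u ++ x) (u ++ y) := by
  induction h with
  | refl => exact Relation.ReflTransGen.refl
  | tail _ hstep ih => exact ih.tail (dstep_append_left hstep)

theorem derives_append {G : CFG V T} {u u' v v' : List (GSym V T)}
    (h1 : G.Derives u u') (h2 : G.Derives v v') : G.Derives (u ++ v) (u' ++ v') :=
  (derives_append_right h1).trans (derives_append_left h2)

theorem subset_satClosure {G : CFG V T} {δ : Set (Q × GSym V T × Q)} :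
    δ ⊆ satClosure G δ := by
  intro t ht
  exact Set.mem_sInter.mpr fun δ' hδ' => hδ'.1 ht

theorem satClosed_satClosure {G : CFG V T} {δ : Set (Q × GSym V T × Q)} :
    SatClosed G (satClosure G δ) := by
  intro A β q q' hP hp
  refine Set.mem_sInter.mpr fun δ' hδ' => ?_
  exact hδ'.2 A β q q' hP (npath_mono (fun t ht => Set.mem_sInter.mp ht δ' hδ') hp)

mutual
inductive Sat (G : CFG V T) (δ : Set (Q × GSym V T × Q)) : Q → GSym V T → Q → Prop
  | base {q : Q} {a : GSym V T} {q' : Q} : (q, a, q') ∈ δ → Sat G δ q a q'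
  | step {A : V} {β : List (GSym V T)} {q q' : Q} :
      (A, β) ∈ G.P → SPath G δ q β q' → Sat G δ q (Sum.inl A) q'
inductive SPath (G : CFG V T) (δ : Set (Q × GSym V T × Q)) : Q → List (GSym V T) → Q → Prop
  | nil (q : Q) : SPath G δ q [] q
  | cons {q q'' q' : Q} {a : GSym V T} {w : List (GSym V T)} :
      Sat G δ q a q'' → SPath G δ q'' w q' → SPath G δ q (a :: w) q'
end

def satSet (G : CFG V T) (δ : Set (Q × GSym V T × Q)) : Set (Q × GSym V T × Q) :=
  {t | Sat G δ t.1 t.2.1 t.2.2}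

theorem npath_satSet_spath {G : CFG V T} {δ : Set (Q × GSym V T × Q)} {q q' : Q}
    {w : List (GSym V T)} (h : NPath (satSet G δ) q w q') : SPath G δ q w q' := by
  induction h with
  | nil => exact SPath.nil _
  | cons he _ ih => exact SPath.cons he ih

theorem satClosure_subset_satSet {G : CFG V T} {δ : Set (Q × GSym V T × Q)} :
    satClosure G δ ⊆ satSet G δ := by
  intro t ht
  exact Set.mem_sInter.mp ht (satSet G δ) ⟨fun s hs => Sat.base hs,
    fun A β q q' hP hp => Sat.step hP (npath_satSet_spath hp)⟩

theorem spath_sound {G : CFG V T} {δ : Set (Q × GSym V T × Q)} {q q' : Q}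
    {w : List (GSym V T)} (h : SPath G δ q w q') :
    ∃ w', G.Derives w w' ∧ NPath δ q w' q' := by
  refine SPath.rec
    (motive_1 := fun q a q' _ => ∃ w, G.Derives [a] w ∧ NPath δ q w q')
    (motive_2 := fun q w q' _ => ∃ w', G.Derives w w' ∧ NPath δ q w' q')
    ?_ ?_ ?_ ?_ h
  · intro q a q' he
    exact ⟨[a], Relation.ReflTransGen.refl, NPath.cons he (NPath.nil _)⟩
  · rintro A β q q' hP _ ⟨w, hd, hn⟩
    exact ⟨w, (Relation.ReflTransGen.single ⟨[], [], A, β, hP, rfl, by simp⟩).trans hd, hn⟩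
  · intro q
    exact ⟨[], Relation.ReflTransGen.refl, NPath.nil _⟩
  · rintro q q'' q' a w _ _ ⟨w1, hd1, hn1⟩ ⟨w2, hd2, hn2⟩
    exact ⟨w1 ++ w2, derives_append hd1 hd2, npath_append hn1 hn2⟩

end Aux

theorem satClosure_accepts_preStar {V T Q : Type} (G : CFG V T)
    (δ : Set (Q × GSym V T × Q)) (q₀ : Q) (F : Set Q) :
    NAccepts (satClosure G δ) q₀ F = G.preStar (NAccepts δ q₀ F) := by
  ext w
  constructor
  · rintro ⟨qf, hF, hp⟩
    obtain ⟨w', hd, hn⟩ := spath_sound (npath_satSet_spath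
      (npath_mono satClosure_subset_satSet hp))
    exact ⟨w', ⟨qf, hF, hn⟩, hd⟩
  · rintro ⟨β, ⟨qf, hF, hn⟩, hd⟩
    refine Relation.ReflTransGen.head_induction_on hd ?_ ?_
    · exact ⟨qf, hF, npath_mono subset_satClosure hn⟩
    · rintro x y ⟨α, γ, A, b, hP, rfl, rfl⟩ _ ⟨qg, hg, hpy⟩
      rw [List.append_assoc] at hpy
      obtain ⟨m1, hα, hrest⟩ := npath_split hpy
      obtain ⟨m2, hb, hγ⟩ := npath_split hrest
      refine ⟨qg, hg, npath_append hα (NPath.cons ?_ hγ)⟩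
      exact satClosed_satClosure A b m1 m2 hP hb
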